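/- For n ≥ 2, h(Z/4 × Z/2^n) satisfies h(Z/4 × Z/2^n) = 2·( 2·h(Z/2 × Z/2^n) + h(Z/4 × Z/2^{n-1}) − 2·h(Z/2 × Z/2^{n-1}) ). -/

import Mathlib

/-!
Let `A = ℤ/2^(a+1) × ℤ/2^(b+1)` and let `A → (ℤ/2)²` be reduction mod 2, with kernel `2A`.
If a subgroup `H` satisfies `H + 2A = A` then `H + 2^i A = A` for all `i`, so `H = A`; hence
every proper subgroup lies in the kernel of one of the three nonzero functionals on `(ℤ/2)²`.
Removing `A` from a chain topped by `A` leaves a chain of proper subgroups, hence a chain below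
one of these three subgroups, any two of which meet in `2A`; inclusion–exclusion counts them.
Chains below a subgroup `M` are the chains of `M`, twice as many as those containing `M`, and
the three subgroups and `2A` are isomorphic to `ℤ/2^a × ℤ/2^(b+1)` (twice: the third one via the
shear `(c, y) ↦ (2c + y, y)`, which needs `a ≤ b`), `ℤ/2^(a+1) × ℤ/2^b` and `ℤ/2^a × ℤ/2^b`.
-/

/-- The number of nonempty chains of subgroups of `G` (under strict inclusion,
i.e. finite sets of subgroups that are totally ordered) whose largest element is `G` itself. -/
noncomputable def numChains (G : Type*) [Group G] : ℕ :=
  Nat.card {C : Finset (Subgroup G) //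
    IsChain (· ≤ ·) (C : Set (Subgroup G)) ∧ (⊤ : Subgroup G) ∈ C}

section Chains

open Finset

variable {α β : Type*} [PartialOrder α]

variable (α) in
def chains : Set (Finset α) := {C | IsChain (· ≤ ·) (C : Set α)}

lemma mem_chains {C : Finset α} : C ∈ chains α ↔ IsChain (· ≤ ·) (C : Set α) := Iff.rfl

def chainsBelow (M : α) : Set (Finset α) := {C ∈ chains α | ∀ x ∈ C, x ≤ M}

lemma chainsBelow_top [OrderTop α] : chainsBelow (⊤ : α) = chains α := by
  ext C
  simp [chainsBelow]

lemma chainsBelow_inter_chainsBelow {α : Type*} [SemilatticeInf α] (M N : α) :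
    chainsBelow M ∩ chainsBelow N = chainsBelow (M ⊓ N) := by
  ext C
  simp only [chainsBelow, Set.mem_inter_iff, Set.mem_sep_iff, le_inf_iff]
  grind

lemma IsChain.exists_forall_le {C : Finset α} (hC : IsChain (· ≤ ·) (C : Set α))
    (hne : C.Nonempty) : ∃ m ∈ C, ∀ x ∈ C, x ≤ m := by
  obtain ⟨m, hm, hmax⟩ := C.exists_maximal hne
  refine ⟨m, hm, fun x hx => ?_⟩
  rcases hC.total hx hm with h | h
  · exact h
  · exact hmax hx h

lemma ncard_chains_top_notMem [OrderTop α] :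
    {C ∈ chains α | ⊤ ∉ C}.ncard = {C ∈ chains α | ⊤ ∈ C}.ncard := by
  classical
  have hinj : Set.InjOn (·.erase ⊤) {C ∈ chains α | ⊤ ∈ C} :=
    (erase_injOn' ⊤).mono fun C hC => hC.2
  rw [← hinj.ncard_image]
  congr 1
  ext C
  constructor
  · intro ⟨hC, hTop⟩
    refine ⟨insert ⊤ C, ⟨?_, mem_insert_self _ _⟩, erase_insert hTop⟩
    rw [mem_chains, coe_insert]
    exact hC.insert fun _ _ _ => Or.inr le_top
  · rintro ⟨D, ⟨hD, -⟩, rfl⟩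
    exact ⟨hD.mono (coe_subset.2 (erase_subset _ _)), notMem_erase _ _⟩

lemma ncard_chains_eq_two_mul [OrderTop α] [Finite α] :
    (chains α).ncard = 2 * {C ∈ chains α | ⊤ ∈ C}.ncard := by
  calc (chains α).ncard = ({C ∈ chains α | ⊤ ∈ C} ∪ {C ∈ chains α | ⊤ ∉ C}).ncard := by
        congr 1; ext C; by_cases h : ⊤ ∈ C <;> simp [h]
    _ = {C ∈ chains α | ⊤ ∈ C}.ncard + {C ∈ chains α | ⊤ ∉ C}.ncard :=
        Set.ncard_union_eq (Set.disjoint_left.2 fun _ h₁ h₂ => h₂.2 h₁.2)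
    _ = 2 * {C ∈ chains α | ⊤ ∈ C}.ncard := by rw [ncard_chains_top_notMem]; ring

lemma ncard_chainsBelow_eq_of_orderEmbedding [PartialOrder β] (f : β ↪o α) {M : α}
    (hf : Set.range f = Set.Iic M) : (chainsBelow M).ncard = (chains β).ncard := by
  classical
  rw [← (map_injective f.toEmbedding).injOn.ncard_image]
  congr 1
  ext C
  constructor
  · intro ⟨hC, hM⟩
    have hrange : ∀ x ∈ C, x ∈ Set.range f := fun x hx => hf ▸ hM x hx
    refine ⟨C.preimage f f.injective.injOn, ?_, ?_⟩
    · rw [mem_chains, coe_preimage]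
      exact hC.preimage_embedding f
    · ext x
      simp only [mem_map, mem_preimage, RelEmbedding.coe_toEmbedding]
      refine ⟨?_, fun hx => ?_⟩
      · rintro ⟨b, hb, rfl⟩
        exact hb
      · obtain ⟨b, rfl⟩ := hrange x hx
        exact ⟨b, hx, rfl⟩
  · rintro ⟨D, hD, rfl⟩
    refine ⟨?_, fun x hx => ?_⟩
    · rw [mem_chains, coe_map]
      exact IsChain.image_embedding_iff.2 hD
    · obtain ⟨b, -, rfl⟩ := mem_map.1 hx
      rw [← Set.mem_Iic, ← hf]
      exact Set.mem_range_self b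

lemma Set.ncard_union_union_add_two_mul {γ : Type*} [Finite γ] {s t u d : Set γ}
    (hst : s ∩ t = d) (hsu : s ∩ u = d) (htu : t ∩ u = d) :
    (s ∪ t ∪ u).ncard + 2 * d.ncard = s.ncard + t.ncard + u.ncard := by
  have h₁ := Set.ncard_union_add_ncard_inter (s ∪ t) u
  have h₂ := Set.ncard_union_add_ncard_inter s t
  rw [Set.union_inter_distrib_right, hsu, htu, Set.union_self] at h₁
  rw [hst] at h₂
  omega

lemma chains_top_notMem_eq_union_chainsBelow [OrderTop α] {M₁ M₂ M₃ : α}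
    (hcover : Set.Iio ⊤ = Set.Iic M₁ ∪ Set.Iic M₂ ∪ Set.Iic M₃) :
    {C ∈ chains α | ⊤ ∉ C} = chainsBelow M₁ ∪ chainsBelow M₂ ∪ chainsBelow M₃ := by
  ext C
  simp only [chainsBelow, Set.mem_union, Set.mem_sep_iff]
  constructor
  · rintro ⟨hC, hTop⟩
    rcases C.eq_empty_or_nonempty with rfl | hne
    · simp [hC]
    obtain ⟨m, hm, hle⟩ := hC.exists_forall_le hne
    have : m ∈ Set.Iio ⊤ := lt_top_iff_ne_top.2 fun h => hTop (h ▸ hm)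
    rw [hcover] at this
    rcases this with (h | h) | h
    · exact Or.inl (Or.inl ⟨hC, fun x hx => (hle x hx).trans h⟩)
    · exact Or.inl (Or.inr ⟨hC, fun x hx => (hle x hx).trans h⟩)
    · exact Or.inr ⟨hC, fun x hx => (hle x hx).trans h⟩
  · have hnotMem : ∀ M ∈ Set.Iic M₁ ∪ Set.Iic M₂ ∪ Set.Iic M₃, ∀ C : Finset α,
        (∀ x ∈ C, x ≤ M) → ⊤ ∉ C := fun M hM C hC hTop =>
      (hcover ▸ hM : M ∈ Set.Iio ⊤).ne (top_le_iff.1 (hC ⊤ hTop))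
    rintro ((⟨hC, h⟩ | ⟨hC, h⟩) | ⟨hC, h⟩)
    · exact ⟨hC, hnotMem M₁ (by simp) C h⟩
    · exact ⟨hC, hnotMem M₂ (by simp) C h⟩
    · exact ⟨hC, hnotMem M₃ (by simp) C h⟩

lemma ncard_chains_top_mem_add_two_mul {α : Type*} [Lattice α] [OrderTop α] [Finite α]
    {M₁ M₂ M₃ D : α} (h₁₂ : M₁ ⊓ M₂ = D) (h₁₃ : M₁ ⊓ M₃ = D) (h₂₃ : M₂ ⊓ M₃ = D)
    (hcover : Set.Iio ⊤ = Set.Iic M₁ ∪ Set.Iic M₂ ∪ Set.Iic M₃) :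
    {C ∈ chains α | ⊤ ∈ C}.ncard + 2 * (chainsBelow D).ncard =
      (chainsBelow M₁).ncard + (chainsBelow M₂).ncard + (chainsBelow M₃).ncard := by
  rw [← ncard_chains_top_notMem, chains_top_notMem_eq_union_chainsBelow hcover]
  exact Set.ncard_union_union_add_two_mul (by rw [chainsBelow_inter_chainsBelow, h₁₂])
    (by rw [chainsBelow_inter_chainsBelow, h₁₃]) (by rw [chainsBelow_inter_chainsBelow, h₂₃])

end Chains

section Subgroups

variable {A B : Type*} [AddGroup A] [AddGroup B]

lemma numChains_eq_ncard (G : Type*) [Group G] :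
    numChains G = {C ∈ chains (Subgroup G) | ⊤ ∈ C}.ncard :=
  Nat.card_coe_set_eq _

lemma ncard_chainsBelow_eq_of_range_eq [Finite B] (ψ : B →+ A) (hψ : Function.Injective ψ)
    {M : AddSubgroup A} (hM : ψ.range = M) :
    (chainsBelow M).ncard = 2 * numChains (Multiplicative B) := by
  subst hM
  let f : Subgroup (Multiplicative B) ↪o AddSubgroup A :=
    AddSubgroup.toSubgroup.symm.toOrderEmbedding.trans
      (OrderEmbedding.ofMapLEIff (AddSubgroup.map ψ) fun _ _ =>
        AddSubgroup.map_le_map_iff_of_injective hψ)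
  have hf : Set.range f = Set.Iic ψ.range := by
    ext K
    constructor
    · rintro ⟨H, rfl⟩
      exact AddSubgroup.map_le_range ψ _
    · intro hK
      refine ⟨AddSubgroup.toSubgroup (K.comap ψ), ?_⟩
      simp [f, AddSubgroup.map_comap_eq, inf_eq_right.2 (Set.mem_Iic.1 hK)]
  rw [ncard_chainsBelow_eq_of_orderEmbedding f hf, ncard_chains_eq_two_mul, numChains_eq_ncard]

lemma numChains_multiplicative [Finite A] :
    numChains (Multiplicative A) = {C ∈ chains (AddSubgroup A) | ⊤ ∈ C}.ncard := by
  have h := ncard_chainsBelow_eq_of_range_eq (AddMonoidHom.id A) Function.injective_id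
    (AddMonoidHom.range_eq_top.2 Function.surjective_id)
  rw [chainsBelow_top, ncard_chains_eq_two_mul] at h
  omega

end Subgroups

namespace ZMod

variable (c : ℕ)

def doubleHom : ZMod (2 ^ c) →+ ZMod (2 ^ (c + 1)) :=
  ZMod.lift (2 ^ c) ⟨zmultiplesHom _ 2, by
    rw [zmultiplesHom_apply, zsmul_eq_mul]
    exact_mod_cast ZMod.natCast_self (2 ^ c * 2)⟩

def parity : ZMod (2 ^ (c + 1)) →+* ZMod 2 :=
  ZMod.castHom (dvd_pow_self 2 c.succ_ne_zero) _

variable {c}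

lemma val_doubleHom (x : ZMod (2 ^ c)) : (doubleHom c x).val = 2 * x.val := by
  have hx : doubleHom c x = ((2 * x.val : ℕ) : ZMod (2 ^ (c + 1))) := by
    conv_lhs => rw [← natCast_zmod_val x, ← Int.cast_natCast, doubleHom, lift_coe]
    rw [zmultiplesHom_apply, zsmul_eq_mul]
    push_cast
    ring
  have hlt : 2 * x.val < 2 ^ (c + 1) := by rw [pow_succ]; linarith [x.val_lt]
  rw [hx, val_cast_of_lt hlt]

lemma doubleHom_injective : Function.Injective (doubleHom c) := fun x y h => by
  have := congrArg ZMod.val h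
  rw [val_doubleHom, val_doubleHom] at this
  exact ZMod.val_injective _ (by omega)

lemma parity_eq_zero_iff {x : ZMod (2 ^ (c + 1))} : parity c x = 0 ↔ Even x.val := by
  rw [parity, castHom_apply, ← natCast_val, natCast_eq_zero_iff_even]

lemma mem_range_doubleHom {x : ZMod (2 ^ (c + 1))} :
    x ∈ (doubleHom c).range ↔ parity c x = 0 := by
  rw [parity_eq_zero_iff, AddMonoidHom.mem_range]
  constructor
  · rintro ⟨y, rfl⟩
    rw [val_doubleHom]
    exact even_two_mul _
  · rintro ⟨q, hq⟩
    have hlt : q < 2 ^ c := by have := x.val_lt; have := pow_succ 2 c; omega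
    refine ⟨q, ZMod.val_injective _ ?_⟩
    rw [val_doubleHom, ZMod.val_cast_of_lt hlt, hq]
    ring

lemma exists_eq_two_nsmul_of_even {n : ℕ} [NeZero n] {x : ZMod n} (hx : Even x.val) :
    ∃ y : ZMod n, x = 2 • y := by
  obtain ⟨q, hq⟩ := hx
  refine ⟨q, ?_⟩
  rw [← natCast_zmod_val x, hq, two_nsmul, Nat.cast_add]

lemma nsmul_eq_zero_of_dvd {n m : ℕ} (h : n ∣ m) (x : ZMod n) : m • x = 0 := by
  rw [nsmul_eq_mul, (natCast_eq_zero_iff m n).2 h, zero_mul]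

end ZMod

lemma AddSubgroup.eq_top_of_forall_exists_add_nsmul {A : Type*} [AddCommGroup A]
    (H : AddSubgroup A) {p j : ℕ} (hA : ∀ x : A, p ^ j • x = 0)
    (hH : ∀ x : A, ∃ h ∈ H, ∃ y, x = h + p • y) : H = ⊤ := by
  have hpow : ∀ i, ∀ x : A, ∃ h ∈ H, ∃ y, x = h + p ^ i • y := by
    intro i
    induction i with
    | zero => exact fun x => ⟨0, H.zero_mem, x, by simp⟩
    | succ i ih =>
      intro x
      obtain ⟨h, hh, y, rfl⟩ := ih x
      obtain ⟨h', hh', y', rfl⟩ := hH y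
      refine ⟨h + p ^ i • h', H.add_mem hh (H.nsmul_mem hh' _), y', ?_⟩
      rw [nsmul_add, pow_succ', mul_nsmul, add_assoc]
  refine eq_top_iff.2 fun x _ => ?_
  obtain ⟨h, hh, y, rfl⟩ := hpow j x
  rwa [hA, add_zero]

open AddMonoidHom in
lemma AddSubgroup.le_ker_fst_or_le_ker_snd_or_le_ker_add {K : AddSubgroup (ZMod 2 × ZMod 2)}
    (hK : K ≠ ⊤) : K ≤ (fst (ZMod 2) (ZMod 2)).ker ∨ K ≤ (snd (ZMod 2) (ZMod 2)).ker ∨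
      K ≤ (fst (ZMod 2) (ZMod 2) + snd (ZMod 2) (ZMod 2)).ker := by
  contrapose! hK
  simp only [SetLike.not_le_iff_exists, mem_ker, coe_fst, coe_snd, AddMonoidHom.add_apply] at hK
  obtain ⟨⟨u, hu, hu₁⟩, ⟨v, hv, hv₂⟩, ⟨w, hw, hw₃⟩⟩ := hK
  have hspan : ∀ u v w t : ZMod 2 × ZMod 2, u.1 ≠ 0 → v.2 ≠ 0 → w.1 + w.2 ≠ 0 →
      t = 0 ∨ t = u ∨ t = v ∨ t = w ∨ t = u + v ∨ t = u + w ∨ t = v + w := by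
    decide
  refine eq_top_iff.2 fun t _ => ?_
  rcases hspan u v w t hu₁ hv₂ hw₃ with rfl | rfl | rfl | rfl | rfl | rfl | rfl <;>
    apply_rules [K.zero_mem, K.add_mem]

section TwoGenerated

open AddMonoidHom ZMod

variable (a b : ℕ)

local notation "𝔸" => ZMod (2 ^ (a + 1)) × ZMod (2 ^ (b + 1))

def modTwo : 𝔸 →+ ZMod 2 × ZMod 2 :=
  (parity a).toAddMonoidHom.prodMap (parity b).toAddMonoidHom

def kerModTwo (ℓ : ZMod 2 × ZMod 2 →+ ZMod 2) : AddSubgroup 𝔸 :=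
  (ℓ.comp (modTwo a b)).ker

def shearDoubleHom (hab : a ≤ b) : ZMod (2 ^ a) × ZMod (2 ^ (b + 1)) →+ 𝔸 :=
  ((doubleHom a).comp (fst _ _) +
    (castHom (pow_dvd_pow 2 (Nat.succ_le_succ hab)) _).toAddMonoidHom.comp (snd _ _)).prod
    (snd _ _)

variable {a b}

@[simp]
lemma modTwo_apply (x : 𝔸) : modTwo a b x = (parity a x.1, parity b x.2) := rfl

lemma mem_kerModTwo {ℓ : ZMod 2 × ZMod 2 →+ ZMod 2} {x : 𝔸} :
    x ∈ kerModTwo a b ℓ ↔ ℓ (modTwo a b x) = 0 := mem_ker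

lemma kerModTwo_inf_kerModTwo {ℓ ℓ' : ZMod 2 × ZMod 2 →+ ZMod 2}
    (h : ∀ u, ℓ u = 0 → ℓ' u = 0 → u = 0) :
    kerModTwo a b ℓ ⊓ kerModTwo a b ℓ' = (modTwo a b).ker := by
  ext x
  rw [AddSubgroup.mem_inf, mem_kerModTwo, mem_kerModTwo, mem_ker]
  exact ⟨fun h' => h _ h'.1 h'.2, fun h' => by simp [h']⟩

lemma kerModTwo_lt_top {ℓ : ZMod 2 × ZMod 2 →+ ZMod 2} (x : 𝔸) (hx : ℓ (modTwo a b x) ≠ 0) :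
    kerModTwo a b ℓ < ⊤ :=
  lt_top_iff_ne_top.2 fun h => hx (mem_kerModTwo.1 (h ▸ AddSubgroup.mem_top x))

lemma exists_eq_two_nsmul_of_modTwo_eq_zero {x : 𝔸} (hx : modTwo a b x = 0) :
    ∃ y, x = 2 • y := by
  simp only [modTwo_apply, Prod.mk_eq_zero, parity_eq_zero_iff] at hx
  obtain ⟨y₁, hy₁⟩ := exists_eq_two_nsmul_of_even hx.1
  obtain ⟨y₂, hy₂⟩ := exists_eq_two_nsmul_of_even hx.2
  exact ⟨(y₁, y₂), Prod.ext hy₁ hy₂⟩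

lemma eq_top_of_map_modTwo_eq_top {H : AddSubgroup 𝔸} (hH : H.map (modTwo a b) = ⊤) :
    H = ⊤ := by
  refine H.eq_top_of_forall_exists_add_nsmul (p := 2) (j := a + b + 2) (fun x => ?_) fun x => ?_
  · exact Prod.ext (nsmul_eq_zero_of_dvd (pow_dvd_pow 2 (by omega)) _)
      (nsmul_eq_zero_of_dvd (pow_dvd_pow 2 (by omega)) _)
  · obtain ⟨h, hh, hhx⟩ := AddSubgroup.mem_map.1 (hH ▸ AddSubgroup.mem_top (modTwo a b x))
    obtain ⟨y, hy⟩ := exists_eq_two_nsmul_of_modTwo_eq_zero (x := x - h)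
      (by rw [map_sub, hhx, sub_self])
    exact ⟨h, hh, y, by rw [← hy, add_sub_cancel]⟩

lemma Iio_top_eq_union_Iic_kerModTwo :
    Set.Iio (⊤ : AddSubgroup 𝔸) =
      Set.Iic (kerModTwo a b (fst _ _)) ∪ Set.Iic (kerModTwo a b (snd _ _)) ∪
        Set.Iic (kerModTwo a b (fst _ _ + snd _ _)) := by
  ext H
  simp only [Set.mem_Iio, Set.mem_union, Set.mem_Iic]
  constructor
  · intro hH
    have hK : H.map (modTwo a b) ≠ ⊤ := fun h => hH.ne (eq_top_of_map_modTwo_eq_top h)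
    rcases AddSubgroup.le_ker_fst_or_le_ker_snd_or_le_ker_add hK with h | h | h <;>
      rw [AddSubgroup.map_le_iff_le_comap, comap_ker] at h <;> tauto
  · rintro ((h | h) | h)
    · exact h.trans_lt (kerModTwo_lt_top (1, 0) (by simp))
    · exact h.trans_lt (kerModTwo_lt_top (0, 1) (by simp))
    · exact h.trans_lt (kerModTwo_lt_top (1, 0) (by simp))

lemma range_prodMap_doubleHom_id :
    ((doubleHom a).prodMap (.id (ZMod (2 ^ (b + 1))))).range = kerModTwo a b (fst _ _) := by
  ext x
  simp [AddSubgroup.mem_prod, mem_range_doubleHom, mem_kerModTwo, -AddMonoidHom.mem_range]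
  exact fun _ => ⟨x.2, rfl⟩

lemma range_prodMap_id_doubleHom :
    ((AddMonoidHom.id (ZMod (2 ^ (a + 1)))).prodMap (doubleHom b)).range =
      kerModTwo a b (snd _ _) := by
  ext x
  simp [AddSubgroup.mem_prod, mem_range_doubleHom, mem_kerModTwo, -AddMonoidHom.mem_range]
  exact fun _ => ⟨x.1, rfl⟩

lemma range_prodMap_doubleHom_doubleHom :
    ((doubleHom a).prodMap (doubleHom b)).range = (modTwo a b).ker := by
  ext x
  simp [AddSubgroup.mem_prod, mem_range_doubleHom, -AddMonoidHom.mem_range]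

lemma parity_castHom (hab : a ≤ b) (y : ZMod (2 ^ (b + 1))) :
    parity a (castHom (pow_dvd_pow 2 (Nat.succ_le_succ hab)) _ y) = parity b y :=
  RingHom.congr_fun (castHom_comp (dvd_pow_self 2 a.succ_ne_zero) _) y

lemma shearDoubleHom_apply (hab : a ≤ b) (c : ZMod (2 ^ a)) (y : ZMod (2 ^ (b + 1))) :
    shearDoubleHom a b hab (c, y) =
      (doubleHom a c + castHom (pow_dvd_pow 2 (Nat.succ_le_succ hab)) _ y, y) := rfl

lemma shearDoubleHom_injective (hab : a ≤ b) : Function.Injective (shearDoubleHom a b hab) := by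
  refine (injective_iff_map_eq_zero _).2 fun ⟨c, y⟩ h => ?_
  rw [shearDoubleHom_apply, Prod.mk_eq_zero] at h
  obtain ⟨h₁, rfl⟩ := h
  rw [map_zero, add_zero] at h₁
  rw [(injective_iff_map_eq_zero _).1 doubleHom_injective c h₁, Prod.mk_zero_zero]

lemma range_shearDoubleHom (hab : a ≤ b) :
    (shearDoubleHom a b hab).range = kerModTwo a b (fst _ _ + snd _ _) := by
  ext ⟨x, y⟩
  simp only [mem_kerModTwo, modTwo_apply, AddMonoidHom.add_apply, coe_fst, coe_snd,
    AddMonoidHom.mem_range]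
  constructor
  · rintro ⟨⟨c, y'⟩, h⟩
    rw [shearDoubleHom_apply, Prod.mk.injEq] at h
    obtain ⟨rfl, rfl⟩ := h
    rw [map_add, mem_range_doubleHom.1 ⟨c, rfl⟩, parity_castHom hab, zero_add,
      CharTwo.add_self_eq_zero]
  · intro h
    have hx : parity a (x - castHom (pow_dvd_pow 2 (Nat.succ_le_succ hab)) _ y) = 0 := by
      rw [map_sub, parity_castHom hab, CharTwo.sub_eq_add, h]
    obtain ⟨c, hc⟩ := mem_range_doubleHom.2 hx
    exact ⟨(c, y), by rw [shearDoubleHom_apply, hc, sub_add_cancel]⟩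

theorem numChains_zmod_two_pow_prod (hab : a ≤ b) :
    (numChains (Multiplicative 𝔸) : ℤ) =
      2 * (2 * numChains (Multiplicative (ZMod (2 ^ a) × ZMod (2 ^ (b + 1))))
        + numChains (Multiplicative (ZMod (2 ^ (a + 1)) × ZMod (2 ^ b)))
        - 2 * numChains (Multiplicative (ZMod (2 ^ a) × ZMod (2 ^ b)))) := by
  have h := ncard_chains_top_mem_add_two_mul (kerModTwo_inf_kerModTwo (by decide))
    (kerModTwo_inf_kerModTwo (by decide)) (kerModTwo_inf_kerModTwo (by decide))
    (Iio_top_eq_union_Iic_kerModTwo (a := a) (b := b))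
  rw [ncard_chainsBelow_eq_of_range_eq _ (doubleHom_injective.prodMap Function.injective_id)
      range_prodMap_doubleHom_id,
    ncard_chainsBelow_eq_of_range_eq _ (Function.injective_id.prodMap doubleHom_injective)
      range_prodMap_id_doubleHom,
    ncard_chainsBelow_eq_of_range_eq _ (shearDoubleHom_injective hab) (range_shearDoubleHom hab),
    ncard_chainsBelow_eq_of_range_eq _ (doubleHom_injective.prodMap doubleHom_injective)
      range_prodMap_doubleHom_doubleHom,
    ← numChains_multiplicative] at h
  omega

end TwoGenerated

theorem numChains_zmod4_recurrence (n : ℕ) (hn : 2 ≤ n) :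
    (numChains (Multiplicative (ZMod 4 × ZMod (2 ^ n))) : ℤ) =
      2 * (2 * numChains (Multiplicative (ZMod 2 × ZMod (2 ^ n)))
        + numChains (Multiplicative (ZMod 4 × ZMod (2 ^ (n - 1))))
        - 2 * numChains (Multiplicative (ZMod 2 × ZMod (2 ^ (n - 1))))) := by
  obtain ⟨k, rfl⟩ : ∃ k, n = k + 2 := ⟨n - 2, by omega⟩
  exact numChains_zmod_two_pow_prod (a := 1) (b := k + 1) (by omega)
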